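/- Fix σ > 0 and ε ∈ (0,1). For each μ ∈ ℝ let X_μ ~ N(μ, σ²), let k(μ) = VaR_ε[-|X_μ|], and let g(μ) = CVaR_ε[-|X_μ|]. Then g is differentiable in μ and g'(μ) = (1/(1-ε))·( ∫_{(k(μ)-μ)/σ}^{-μ/σ} φ(z) dz − ∫_{-μ/σ}^{(-k(μ)-μ)/σ} φ(z) dz ), where φ is the standard normal density. In particular g'(μ) < 0 for μ > 0 and g'(μ) > 0 for μ < 0. -/

import Mathlib

open MeasureTheory ProbabilityTheory

/-- The Gaussian measure on ℝ with mean `μ` and standard deviation `σ`. -/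
noncomputable def gaussMeas (μ σ : ℝ) : Measure ℝ :=
  gaussianReal μ ⟨σ ^ 2, sq_nonneg σ⟩

/-- The standard normal probability density function `φ(z) = (1/√(2π))·exp(-z²/2)`. -/
noncomputable def stdNormalPdf (z : ℝ) : ℝ :=
  (Real.sqrt (2 * Real.pi))⁻¹ * Real.exp (-z ^ 2 / 2)

/-- The conditional value-at-risk of a function `Y` of a random variable with law `P`,
at level `ε`, given that `k` is the value-at-risk `VaR_ε[Y]`:
`CVaR_ε[Y] = (1/(1-ε))·E[Y·1{Y ≥ k}]`. -/
noncomputable def cvar (P : Measure ℝ) (ε : ℝ) (Y : ℝ → ℝ) (k : ℝ) : ℝ :=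
  (1 / (1 - ε)) * ∫ x in {x | k ≤ Y x}, Y x ∂P

/-!
Write `Φ` for a primitive of `φ` and `Ψ t = t Φ t + φ t` for a primitive of `Φ`, and put
`u = (k - μ)/σ`, `v = (-k - μ)/σ`, `w = -μ/σ`. The VaR condition reads `Φ v - Φ u = 1 - ε`, and
integrating `x ↦ -|x|` against the Gaussian density gives
`(1 - ε) g(μ) = σ (Ψ u + Ψ v - 2 Ψ w) + (1 - ε) k(μ)`.
The left side of the VaR condition is strictly monotone in `k`, so by the implicit function
theorem `k` is differentiable; differentiating, the terms in `k'` cancel because of the VaR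
condition, which leaves
`(1 - ε) g'(μ) = (Φ w - Φ u) - (Φ v - Φ w)`. Since `u = w - L` and `v = w + L` with `L = -k/σ > 0`,
`g'(μ)` has the sign of `-μ`: of two adjacent intervals of equal length, the one nearer to `0`
carries more standard normal mass.
-/

open Filter Topology Set Real

section StdNormal

theorem continuous_stdNormalPdf : Continuous stdNormalPdf := by
  unfold stdNormalPdf
  fun_prop

theorem stdNormalPdf_pos (z : ℝ) : 0 < stdNormalPdf z := by
  unfold stdNormalPdf
  positivity

theorem stdNormalPdf_lt_of_sq_lt {a b : ℝ} (h : b ^ 2 < a ^ 2) :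
    stdNormalPdf a < stdNormalPdf b := by
  unfold stdNormalPdf
  gcongr

theorem stdNormalPdf_neg (z : ℝ) : stdNormalPdf (-z) = stdNormalPdf z := by
  simp [stdNormalPdf]

theorem hasDerivAt_stdNormalPdf (z : ℝ) :
    HasDerivAt stdNormalPdf (-z * stdNormalPdf z) z := by
  have h : HasDerivAt (fun z : ℝ => -z ^ 2 / 2) (-z) z :=
    ((hasDerivAt_pow 2 z).neg.div_const 2).congr_deriv (by ring)
  exact (h.exp.const_mul (√(2 * π))⁻¹).congr_deriv (by simp only [stdNormalPdf]; ring)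

noncomputable def stdNormalPrim (t : ℝ) : ℝ := ∫ z in (0 : ℝ)..t, stdNormalPdf z

theorem hasDerivAt_stdNormalPrim (t : ℝ) : HasDerivAt stdNormalPrim (stdNormalPdf t) t :=
  intervalIntegral.integral_hasDerivAt_right (continuous_stdNormalPdf.intervalIntegrable 0 t)
    (continuous_stdNormalPdf.stronglyMeasurableAtFilter _ _) continuous_stdNormalPdf.continuousAt

theorem contDiff_stdNormalPrim : ContDiff ℝ 1 stdNormalPrim := by
  rw [contDiff_one_iff_deriv]
  refine ⟨fun t => (hasDerivAt_stdNormalPrim t).differentiableAt, ?_⟩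
  rw [show deriv stdNormalPrim = stdNormalPdf from
    funext fun t => (hasDerivAt_stdNormalPrim t).deriv]
  exact continuous_stdNormalPdf

theorem integral_stdNormalPdf (a b : ℝ) :
    ∫ z in a..b, stdNormalPdf z = stdNormalPrim b - stdNormalPrim a :=
  (intervalIntegral.integral_interval_sub_left (continuous_stdNormalPdf.intervalIntegrable 0 b)
    (continuous_stdNormalPdf.intervalIntegrable 0 a)).symm

theorem strictMono_stdNormalPrim : StrictMono stdNormalPrim :=
  strictMono_of_hasDerivAt_pos hasDerivAt_stdNormalPrim stdNormalPdf_pos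

theorem stdNormalPrim_neg (t : ℝ) : stdNormalPrim (-t) = -stdNormalPrim t := by
  have h := intervalIntegral.integral_comp_neg (a := 0) (b := t) stdNormalPdf
  simp only [stdNormalPdf_neg, neg_zero] at h
  rw [stdNormalPrim, stdNormalPrim, intervalIntegral.integral_symm, h]

theorem stdNormalPrim_sub_lt_of_neg {w L : ℝ} (hw : w < 0) (hL : 0 < L) :
    stdNormalPrim w - stdNormalPrim (w - L) < stdNormalPrim (w + L) - stdNormalPrim w := by
  have hderiv (t : ℝ) : HasDerivAt (fun t => stdNormalPrim (w + t) + stdNormalPrim (w - t))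
      (stdNormalPdf (w + t) - stdNormalPdf (w - t)) t :=
    (((hasDerivAt_stdNormalPrim _).comp_const_add w t).add
      ((hasDerivAt_stdNormalPrim _).comp_const_sub w t)).congr_deriv (by ring)
  have hmono : StrictMonoOn (fun t => stdNormalPrim (w + t) + stdNormalPrim (w - t)) (Ici 0) := by
    refine strictMonoOn_of_hasDerivWithinAt_pos (convex_Ici 0)
      (fun t _ => (hderiv t).continuousAt.continuousWithinAt)
      (fun t _ => (hderiv t).hasDerivWithinAt) fun t ht => ?_
    rw [interior_Ici] at ht
    exact sub_pos.2 (stdNormalPdf_lt_of_sq_lt (by nlinarith [mem_Ioi.1 ht]))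
  have := hmono self_mem_Ici hL.le hL
  simp only [add_zero, sub_zero] at this
  linarith

theorem stdNormalPrim_sub_lt_of_pos {w L : ℝ} (hw : 0 < w) (hL : 0 < L) :
    stdNormalPrim (w + L) - stdNormalPrim w < stdNormalPrim w - stdNormalPrim (w - L) := by
  have := stdNormalPrim_sub_lt_of_neg (neg_lt_zero.2 hw) hL
  rw [show -w - L = -(w + L) by ring, show -w + L = -(w - L) by ring, stdNormalPrim_neg,
    stdNormalPrim_neg, stdNormalPrim_neg] at this
  linarith

noncomputable def stdNormalSecondPrim (t : ℝ) : ℝ := t * stdNormalPrim t + stdNormalPdf t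

theorem hasDerivAt_stdNormalSecondPrim (t : ℝ) :
    HasDerivAt stdNormalSecondPrim (stdNormalPrim t) t :=
  (((hasDerivAt_id t).mul (hasDerivAt_stdNormalPrim t)).add
    (hasDerivAt_stdNormalPdf t)).congr_deriv (by simp)

end StdNormal

section ImplicitFunction

variable {𝕜 : Type*} [NontriviallyNormedField 𝕜]
  {E₁ : Type*} [NormedAddCommGroup E₁] [NormedSpace 𝕜 E₁] [CompleteSpace E₁]
  {E₂ : Type*} [NormedAddCommGroup E₂] [NormedSpace 𝕜 E₂] [CompleteSpace E₂]
  {F : Type*} [NormedAddCommGroup F] [NormedSpace 𝕜 F] [CompleteSpace F]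

theorem HasStrictFDerivAt.hasStrictFDerivAt_of_apply_eq {f : E₁ × E₂ → F}
    {f' : E₁ × E₂ →L[𝕜] F} {φ : E₁ → E₂} {x₀ : E₁} (hf : HasStrictFDerivAt f f' (x₀, φ x₀))
    (hf₂ : (f' ∘L .inr 𝕜 E₁ E₂).IsInvertible)
    (hinj : ∀ᶠ x in 𝓝 x₀, Function.Injective fun y => f (x, y))
    (hφ : ∀ᶠ x in 𝓝 x₀, f (x, φ x) = f (x₀, φ x₀)) :
    HasStrictFDerivAt φ (-(f' ∘L .inr 𝕜 E₁ E₂).inverse ∘L (f' ∘L .inl 𝕜 E₁ E₂)) x₀ := by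
  refine (hf.hasStrictFDerivAt_implicitFunctionOfProdDomain hf₂).congr_of_eventuallyEq ?_
  filter_upwards [hinj, hφ, hf.eventually_apply_implicitFunctionOfProdDomain hf₂]
    with x hx hφx hψx
  exact hx (hψx.trans hφx.symm)

end ImplicitFunction

theorem ContDiffAt.differentiableAt_of_apply_eq {𝕜 : Type*} [RCLike 𝕜]
    {E : Type*} [NormedAddCommGroup E] [NormedSpace 𝕜 E] [CompleteSpace E]
    {f : E × 𝕜 → 𝕜} {φ : E → 𝕜} {x₀ : E} {d : 𝕜}
    (hf : ContDiffAt 𝕜 1 f (x₀, φ x₀)) (hd : HasDerivAt (fun y => f (x₀, y)) d (φ x₀))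
    (hd₀ : d ≠ 0) (hinj : ∀ᶠ x in 𝓝 x₀, Function.Injective fun y => f (x, y))
    (hφ : ∀ᶠ x in 𝓝 x₀, f (x, φ x) = f (x₀, φ x₀)) : DifferentiableAt 𝕜 φ x₀ := by
  have hf' := hf.hasStrictFDerivAt one_ne_zero
  have hpartial : fderiv 𝕜 f (x₀, φ x₀) (0, 1) = d :=
    (hf'.hasFDerivAt.comp_hasDerivAt _
      ((hasDerivAt_const _ x₀).prodMk (hasDerivAt_id _))).unique hd
  refine (hf'.hasStrictFDerivAt_of_apply_eq
    ⟨ContinuousLinearEquiv.unitsEquivAut 𝕜 (Units.mk0 d hd₀), ?_⟩ hinj hφ).differentiableAt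
  ext
  simp [hpartial]

section Gaussian

variable {σ : ℝ}

instance isProbabilityMeasure_gaussMeas (μ : ℝ) : IsProbabilityMeasure (gaussMeas μ σ) := by
  unfold gaussMeas
  exact instIsProbabilityMeasureGaussianReal _ _

theorem continuous_gaussianPDFReal (μ : ℝ) (v : NNReal) : Continuous (gaussianPDFReal μ v) := by
  unfold gaussianPDFReal
  fun_prop

theorem gaussMeasVar_ne_zero (hσ : σ ≠ 0) : (⟨σ ^ 2, sq_nonneg σ⟩ : NNReal) ≠ 0 := by
  simpa [← NNReal.coe_ne_zero] using hσ

theorem gaussianPDFReal_eq_stdNormalPdf (hσ : 0 < σ) (μ x : ℝ) :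
    gaussianPDFReal μ ⟨σ ^ 2, sq_nonneg σ⟩ x = σ⁻¹ * stdNormalPdf ((x - μ) / σ) := by
  change (√(2 * π * σ ^ 2))⁻¹ * rexp (-(x - μ) ^ 2 / (2 * σ ^ 2)) = _
  rw [sqrt_mul (by positivity), sqrt_sq hσ.le, stdNormalPdf]
  field_simp

theorem setIntegral_gaussMeas (hσ : σ ≠ 0) (μ : ℝ) {s : Set ℝ} (hs : MeasurableSet s)
    (f : ℝ → ℝ) :
    ∫ x in s, f x ∂gaussMeas μ σ = ∫ x in s, gaussianPDFReal μ ⟨σ ^ 2, sq_nonneg σ⟩ x * f x := by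
  rw [← integral_indicator hs, gaussMeas, integral_gaussianReal_eq_integral_smul
    (gaussMeasVar_ne_zero hσ), ← integral_indicator hs]
  congr with x
  by_cases hx : x ∈ s <;> simp [hx]

theorem hasDerivAt_stdNormalPrim_standardize (hσ : 0 < σ) (μ x : ℝ) :
    HasDerivAt (fun x => stdNormalPrim ((x - μ) / σ))
      (gaussianPDFReal μ ⟨σ ^ 2, sq_nonneg σ⟩ x) x := by
  rw [gaussianPDFReal_eq_stdNormalPdf hσ]
  exact ((hasDerivAt_stdNormalPrim _).comp x
    (((hasDerivAt_id x).sub_const μ).div_const σ)).congr_deriv (by simp [mul_comm])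

theorem integral_mul_gaussianPDFReal (hσ : 0 < σ) (μ a b : ℝ) :
    ∫ x in a..b, x * gaussianPDFReal μ ⟨σ ^ 2, sq_nonneg σ⟩ x =
      (b * stdNormalPrim ((b - μ) / σ) - σ * stdNormalSecondPrim ((b - μ) / σ)) -
        (a * stdNormalPrim ((a - μ) / σ) - σ * stdNormalSecondPrim ((a - μ) / σ)) := by
  refine intervalIntegral.integral_eq_sub_of_hasDerivAt
    (f := fun x => x * stdNormalPrim ((x - μ) / σ) - σ * stdNormalSecondPrim ((x - μ) / σ))
    (fun x _ => ?_) ((continuous_id.mul (continuous_gaussianPDFReal _ _)).intervalIntegrable a b)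
  have hΨ := (hasDerivAt_stdNormalSecondPrim _).comp x
    (((hasDerivAt_id x).sub_const μ).div_const σ)
  refine (((hasDerivAt_id x).mul (hasDerivAt_stdNormalPrim_standardize hσ μ x)).sub
    (hΨ.const_mul σ)).congr_deriv ?_
  field_simp
  simp

theorem gaussMeas_Ioo (hσ : 0 < σ) (μ : ℝ) {a b : ℝ} (hab : a ≤ b) :
    gaussMeas μ σ (Ioo a b) =
      ENNReal.ofReal (stdNormalPrim ((b - μ) / σ) - stdNormalPrim ((a - μ) / σ)) := by
  rw [gaussMeas, gaussianReal_apply_eq_integral _ (gaussMeasVar_ne_zero hσ.ne'),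
    ← integral_Ioc_eq_integral_Ioo, ← intervalIntegral.integral_of_le hab,
    intervalIntegral.integral_eq_sub_of_hasDerivAt
      (fun x _ => hasDerivAt_stdNormalPrim_standardize hσ μ x)
      ((integrable_gaussianPDFReal _ _).intervalIntegrable)]

end Gaussian

section CentralMass

variable {σ : ℝ}

noncomputable def centralMass (σ μ c : ℝ) : ℝ :=
  stdNormalPrim ((-c - μ) / σ) - stdNormalPrim ((c - μ) / σ)

theorem hasDerivAt_centralMass (σ μ c : ℝ) :
    HasDerivAt (centralMass σ μ)
      (-(stdNormalPdf ((-c - μ) / σ) + stdNormalPdf ((c - μ) / σ)) / σ) c := by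
  have hv := (hasDerivAt_stdNormalPrim _).comp c (((hasDerivAt_id c).neg.sub_const μ).div_const σ)
  have hu := (hasDerivAt_stdNormalPrim _).comp c (((hasDerivAt_id c).sub_const μ).div_const σ)
  exact (hv.sub hu).congr_deriv (by simp; ring)

theorem strictAnti_centralMass (hσ : 0 < σ) (μ : ℝ) : StrictAnti (centralMass σ μ) :=
  strictAnti_of_hasDerivAt_neg (hasDerivAt_centralMass σ μ) fun _ =>
    div_neg_of_neg_of_pos (neg_neg_of_pos (add_pos (stdNormalPdf_pos _) (stdNormalPdf_pos _))) hσ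

theorem contDiff_centralMass (σ : ℝ) : ContDiff ℝ 1 fun p : ℝ × ℝ => centralMass σ p.1 p.2 :=
  (contDiff_stdNormalPrim.comp (by fun_prop)).sub (contDiff_stdNormalPrim.comp (by fun_prop))

theorem differentiableAt_of_centralMass_eq (hσ : 0 < σ) {k : ℝ → ℝ} {r : ℝ}
    (hk : ∀ μ, centralMass σ μ (k μ) = r) (μ : ℝ) : DifferentiableAt ℝ k μ :=
  (contDiff_centralMass σ).contDiffAt.differentiableAt_of_apply_eq (hasDerivAt_centralMass σ μ _)
    (div_ne_zero (neg_ne_zero.2 (add_pos (stdNormalPdf_pos _) (stdNormalPdf_pos _)).ne') hσ.ne')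
    (.of_forall fun x => (strictAnti_centralMass hσ x).injective)
    (.of_forall fun x => (hk x).trans (hk μ).symm)

end CentralMass

section ClosedForm

variable {σ : ℝ}

theorem centralMass_eq_one_sub (hσ : 0 < σ) {μ c ε : ℝ} (hc : c ≤ 0) (hε₀ : 0 ≤ ε)
    (hε₁ : ε ≤ 1) (h : gaussMeas μ σ {x | -|x| ≤ c} = ENNReal.ofReal ε) :
    centralMass σ μ c = 1 - ε := by
  have hcompl : {x : ℝ | -|x| ≤ c}ᶜ = Ioo c (-c) := by
    ext x
    simp only [mem_compl_iff, mem_ofPred_eq, not_le, mem_Ioo, lt_neg, abs_lt, neg_neg]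
  have hmeas : MeasurableSet {x : ℝ | -|x| ≤ c} := by
    rw [← compl_compl {x : ℝ | -|x| ≤ c}, hcompl]
    exact measurableSet_Ioo.compl
  have hmass : 0 ≤ centralMass σ μ c :=
    sub_nonneg.2 (strictMono_stdNormalPrim.monotone (by gcongr; linarith))
  rw [← ENNReal.ofReal_eq_ofReal_iff hmass (sub_nonneg.2 hε₁), ENNReal.ofReal_sub _ hε₀,
    ENNReal.ofReal_one, ← h, ← prob_compl_eq_one_sub hmeas, hcompl,
    gaussMeas_Ioo hσ μ (by linarith), centralMass]

theorem lt_zero_of_gaussMeas_neg_abs_le {μ c ε : ℝ} (hε : ε < 1)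
    (h : gaussMeas μ σ {x | -|x| ≤ c} = ENNReal.ofReal ε) : c < 0 := by
  by_contra! hc
  have huniv : {x : ℝ | -|x| ≤ c} = univ :=
    eq_univ_of_forall fun x => (neg_nonpos.2 (abs_nonneg x)).trans hc
  rw [huniv, measure_univ, eq_comm, ENNReal.ofReal_eq_one] at h
  exact hε.ne h

theorem cvar_neg_abs_gaussMeas (hσ : 0 < σ) (ε μ : ℝ) {c : ℝ} (hc : c ≤ 0) :
    cvar (gaussMeas μ σ) ε (fun x => -|x|) c = 1 / (1 - ε) *
      (σ * (stdNormalSecondPrim ((c - μ) / σ) + stdNormalSecondPrim ((-c - μ) / σ) -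
        2 * stdNormalSecondPrim (-μ / σ)) + c * centralMass σ μ c) := by
  set p := gaussianPDFReal μ ⟨σ ^ 2, sq_nonneg σ⟩
  have hint (a b : ℝ) : IntervalIntegrable (fun x => p x * -|x|) volume a b :=
    ((continuous_gaussianPDFReal _ _).mul continuous_abs.neg).intervalIntegrable a b
  have hset : {x : ℝ | c ≤ -|x|} = Icc c (-c) := by
    ext x
    simp only [mem_ofPred_eq, mem_Icc, le_neg, abs_le, neg_neg]
  have hneg : ∫ x in c..0, p x * -|x| = ∫ x in c..0, x * p x :=
    intervalIntegral.integral_congr fun x hx => by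
      rw [uIcc_of_le hc] at hx
      simp only [abs_of_nonpos hx.2, neg_neg, mul_comm]
  have hpos : ∫ x in (0 : ℝ)..(-c), p x * -|x| = -∫ x in (0 : ℝ)..(-c), x * p x := by
    rw [← intervalIntegral.integral_neg]
    refine intervalIntegral.integral_congr fun x hx => ?_
    rw [uIcc_of_le (by linarith)] at hx
    simp only [abs_of_nonneg hx.1, neg_mul, mul_comm]
  rw [cvar, hset, setIntegral_gaussMeas hσ.ne' μ measurableSet_Icc, integral_Icc_eq_integral_Ioc,
    ← intervalIntegral.integral_of_le (by linarith),
    ← intervalIntegral.integral_add_adjacent_intervals (hint c 0) (hint 0 (-c)), hneg, hpos,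
    integral_mul_gaussianPDFReal hσ, integral_mul_gaussianPDFReal hσ, centralMass, zero_sub]
  ring

end ClosedForm

theorem hasDerivAt_stdNormalSecondPrim_add_mul {σ r : ℝ} (hσ : σ ≠ 0) {k : ℝ → ℝ} {k' μ : ℝ}
    (hk : HasDerivAt k k' μ) (hr : centralMass σ μ (k μ) = r) :
    HasDerivAt (fun μ => σ * (stdNormalSecondPrim ((k μ - μ) / σ) +
        stdNormalSecondPrim ((-k μ - μ) / σ) - 2 * stdNormalSecondPrim (-μ / σ)) + r * k μ)
      ((stdNormalPrim (-μ / σ) - stdNormalPrim ((k μ - μ) / σ)) -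
        (stdNormalPrim ((-k μ - μ) / σ) - stdNormalPrim (-μ / σ))) μ := by
  have hu := (hasDerivAt_stdNormalSecondPrim _).comp μ ((hk.sub (hasDerivAt_id μ)).div_const σ)
  have hv :=
    (hasDerivAt_stdNormalSecondPrim _).comp μ ((hk.neg.sub (hasDerivAt_id μ)).div_const σ)
  have hw := (hasDerivAt_stdNormalSecondPrim _).comp μ ((hasDerivAt_id μ).neg.div_const σ)
  refine ((((hu.add hv).sub (hw.const_mul 2)).const_mul σ).add (hk.const_mul r)).congr_deriv ?_
  simp only [Pi.sub_apply, Pi.neg_apply, id]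
  rw [← hr, centralMass]
  field_simp
  ring

theorem hasDerivAt_cvar_neg_abs_general
    (σ ε : ℝ) (hσ : 0 < σ) (hε : ε ∈ Set.Ioo (0 : ℝ) 1)
    (k g : ℝ → ℝ)
    (hk : ∀ μ, gaussMeas μ σ {x | -|x| ≤ k μ} = ENNReal.ofReal ε)
    (hg : ∀ μ, g μ = cvar (gaussMeas μ σ) ε (fun x => -|x|) (k μ)) :
    ∀ μ,
      HasDerivAt g
        ((1 / (1 - ε)) *
          ((∫ z in ((k μ - μ) / σ)..(-μ / σ), stdNormalPdf z) -
            ∫ z in (-μ / σ)..((-k μ - μ) / σ), stdNormalPdf z)) μ ∧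
      (0 < μ →
        (1 / (1 - ε)) *
          ((∫ z in ((k μ - μ) / σ)..(-μ / σ), stdNormalPdf z) -
            ∫ z in (-μ / σ)..((-k μ - μ) / σ), stdNormalPdf z) < 0) ∧
      (μ < 0 →
        0 < (1 / (1 - ε)) *
          ((∫ z in ((k μ - μ) / σ)..(-μ / σ), stdNormalPdf z) -
            ∫ z in (-μ / σ)..((-k μ - μ) / σ), stdNormalPdf z)) := by
  intro μ
  have hk_neg (μ : ℝ) : k μ < 0 := lt_zero_of_gaussMeas_neg_abs_le hε.2 (hk μ)
  have hmass (μ : ℝ) : centralMass σ μ (k μ) = 1 - ε :=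
    centralMass_eq_one_sub hσ (hk_neg μ).le hε.1.le hε.2.le (hk μ)
  have hg_eq : g = fun μ => 1 / (1 - ε) * (σ * (stdNormalSecondPrim ((k μ - μ) / σ) +
      stdNormalSecondPrim ((-k μ - μ) / σ) - 2 * stdNormalSecondPrim (-μ / σ)) +
      (1 - ε) * k μ) := by
    ext μ
    rw [hg, cvar_neg_abs_gaussMeas hσ ε μ (hk_neg μ).le, hmass, mul_comm (k μ)]
  have hderiv := (hasDerivAt_stdNormalSecondPrim_add_mul hσ.ne'
    (differentiableAt_of_centralMass_eq hσ hmass μ).hasDerivAt (hmass μ)).const_mul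
      (1 / (1 - ε))
  rw [← hg_eq] at hderiv
  have hL : 0 < -k μ / σ := div_pos (neg_pos.2 (hk_neg μ)) hσ
  have hc : 0 < 1 / (1 - ε) := one_div_pos.2 (sub_pos.2 hε.2)
  rw [integral_stdNormalPdf, integral_stdNormalPdf]
  refine ⟨hderiv, fun hμ => ?_, fun hμ => ?_⟩
  all_goals rw [show (k μ - μ) / σ = -μ / σ - -k μ / σ by ring,
    show (-k μ - μ) / σ = -μ / σ + -k μ / σ by ring]
  · exact mul_neg_of_pos_of_neg hc (sub_neg.2
      (stdNormalPrim_sub_lt_of_neg (div_neg_of_neg_of_pos (neg_neg_of_pos hμ) hσ) hL))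
  · exact mul_pos hc (sub_pos.2 (stdNormalPrim_sub_lt_of_pos (div_pos (neg_pos.2 hμ) hσ) hL))

/-- Fix `σ > 0` and `ε ∈ (0,1)`. For each `μ` let `X_μ ~ N(μ, σ²)`, let
`k μ = VaR_ε[-|X_μ|]` (the unique nonpositive real with `P(-|X_μ| ≤ k μ) = ε`) and let
`g μ = CVaR_ε[-|X_μ|]`. Then `g` is differentiable with derivative
`g'(μ) = (1/(1-ε))·(∫_{(k(μ)-μ)/σ}^{-μ/σ} φ − ∫_{-μ/σ}^{(-k(μ)-μ)/σ} φ)`;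
in particular `g'(μ) < 0` for `μ > 0` and `g'(μ) > 0` for `μ < 0`. -/
theorem hasDerivAt_cvar_neg_abs
    (σ ε : ℝ) (hσ : 0 < σ) (hε : ε ∈ Set.Ioo (0 : ℝ) 1)
    (k g : ℝ → ℝ) (hk0 : ∀ μ, k μ ≤ 0)
    (hk : ∀ μ, gaussMeas μ σ {x | -|x| ≤ k μ} = ENNReal.ofReal ε)
    (hg : ∀ μ, g μ = cvar (gaussMeas μ σ) ε (fun x => -|x|) (k μ)) :
    ∀ μ,
      HasDerivAt g
        ((1 / (1 - ε)) *
          ((∫ z in ((k μ - μ) / σ)..(-μ / σ), stdNormalPdf z) -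
            ∫ z in (-μ / σ)..((-k μ - μ) / σ), stdNormalPdf z)) μ ∧
      (0 < μ →
        (1 / (1 - ε)) *
          ((∫ z in ((k μ - μ) / σ)..(-μ / σ), stdNormalPdf z) -
            ∫ z in (-μ / σ)..((-k μ - μ) / σ), stdNormalPdf z) < 0) ∧
      (μ < 0 →
        0 < (1 / (1 - ε)) *
          ((∫ z in ((k μ - μ) / σ)..(-μ / σ), stdNormalPdf z) -
            ∫ z in (-μ / σ)..((-k μ - μ) / σ), stdNormalPdf z)) :=
  hasDerivAt_cvar_neg_abs_general σ ε hσ hε k g hk hg
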